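/- arXiv:2306.07798 — 2 statements merged into one kernel-verified Lean document; each statement's English description precedes it below -/
import Mathlib

section
/- Let E and V be Lie algebras over a field K and let ρ : E → Der(V) be a representation of E on V by derivations. Define a bilinear operation on the direct sum E ⊕ V by (x, v) ∘ (y, w) := ([x, y]_E, ρ(x)(w) + [v, w]_V). Then ∘ satisfies the left Leibniz identity (i.e., E ⊕ V is the non-abelian hemisemidirect product Leibniz algebra) if and only if [ρ(x)(v), w]_V = 0 for all x ∈ E and v, w ∈ V, i.e., if and only if the representation ρ is coherent. -/
/-- The candidate non-abelian hemisemidirect product bracket on `E ⊕ V`. -/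
def hemiCirc {K E V : Type*} [Field K] [LieRing E] [LieAlgebra K E]
    [LieRing V] [LieAlgebra K V]
    (ρ : E →ₗ⁅K⁆ LieDerivation K V V) (p q : E × V) : E × V :=
  (⁅p.1, q.1⁆, ρ p.1 q.2 + ⁅p.2, q.2⁆)

/-- The operation `(x,v) ∘ (y,w) = ([x,y], ρ(x)(w) + [v,w])` on `E ⊕ V`
satisfies the left Leibniz identity iff the representation `ρ` is coherent. -/
theorem hemisemidirect_leibniz_iff_coherent
    (K : Type*) [Field K] (E V : Type*) [LieRing E] [LieAlgebra K E]
    [LieRing V] [LieAlgebra K V]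
    (ρ : E →ₗ⁅K⁆ LieDerivation K V V) :
    (∀ a b c : E × V,
        hemiCirc ρ a (hemiCirc ρ b c)
          = hemiCirc ρ (hemiCirc ρ a b) c + hemiCirc ρ b (hemiCirc ρ a c))
      ↔ (∀ (x : E) (v w : V), ⁅(ρ x v : V), w⁆ = 0) := by
  constructor
  · intro h x v w
    have := congrArg Prod.snd (h (0, v) (x, 0) (0, w))
    simp [hemiCirc, LieDerivation.apply_lie_eq_add] at this
    rw [eq_comm, sub_eq_self] at this
    rw [← lie_skew, this, neg_zero]
  · intro h a b c
    obtain ⟨x, v⟩ := a; obtain ⟨y, w⟩ := b; obtain ⟨z, u⟩ := c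
    have hxy : (ρ ⁅x, y⁆) u = ρ x (ρ y u) - ρ y (ρ x u) := by
      simp [LieHom.map_lie, LieDerivation.lie_apply]
    simp only [hemiCirc, Prod.mk_add_mk, Prod.mk.injEq]
    constructor
    · exact leibniz_lie x y z
    · simp only [map_add, hxy, LieDerivation.apply_lie_eq_add, lie_add, add_lie,
        leibniz_lie v w u, h]
      abel
end

section
/- Let g be a Lie algebra over a field K and let T : g → g be a bijective strict embedding tensor with respect to the adjoint representation, i.e., a bijective linear map satisfying [T x, T y] = T([T x, y]) for all x, y ∈ g. Then the inverse map T⁻¹ belongs to the centroid of g (i.e., [x, T⁻¹(y)] = T⁻¹([x, y]) for all x, y ∈ g) and T⁻¹ is itself a strict embedding tensor with respect to the adjoint representation: [T⁻¹ x, T⁻¹ y] = T⁻¹([T⁻¹ x, y]) for all x, y ∈ g. -/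
/-- The inverse of a bijective strict embedding tensor for the adjoint
representation lies in the centroid and is itself a strict embedding tensor. -/
theorem inverse_strict_embedding_tensor
    (K : Type*) [Field K] (g : Type*) [LieRing g] [LieAlgebra K g]
    (T : g →ₗ[K] g)
    (hbij : Function.Bijective T)
    (hT : ∀ x y : g, ⁅T x, T y⁆ = T ⁅T x, y⁆)
    (S : g →ₗ[K] g)
    (hST : ∀ x : g, S (T x) = x) (hTS : ∀ x : g, T (S x) = x) :
    (∀ x y : g, ⁅x, S y⁆ = S ⁅x, y⁆) ∧
    (∀ x y : g, ⁅S x, S y⁆ = S ⁅S x, y⁆) := by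
  have h1 : ∀ x y : g, ⁅x, S y⁆ = S ⁅x, y⁆ := by
    intro x y
    have := hT (S x) (S y)
    rw [hTS, hTS] at this
    calc ⁅x, S y⁆ = S (T ⁅x, S y⁆) := (hST _).symm
    _ = S ⁅x, y⁆ := by rw [← this]
  exact ⟨h1, fun x y => h1 (S x) y⟩
end
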